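/- arXiv:1802.05004 — 5 statements merged into one kernel-verified Lean document; each statement's English description precedes it below -/
import Mathlib

section
/- Let n, ℓ be positive integers, q ≥ 2 an integer, M ∈ ℤ_q^{n×ℓ}, v ∈ ℤ_q^n, and VALID ⊆ ℤ_q^ℓ. Let σ be a permutation of [ℓ], acting on ℤ_q^ℓ by (σ·w)_i = w_{σ(i)}, and assume that for all w ∈ ℤ_q^ℓ: w ∈ VALID if and only if σ·w ∈ VALID. Suppose t_w, w₂, w₃ ∈ ℤ_q^ℓ satisfy: t_w ∈ VALID, t_w + σ·w₃ = σ·w₂ (mod q), and M·w₂ − v = M·w₃ (mod q). Then the vector w' := σ⁻¹·t_w satisfies w' ∈ VALID and M·w' = v (mod q). -/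
/-- Extraction step of the Stern-like protocol: if `t_w ∈ VALID`, `VALID` is invariant under
the permutation action `(σ·w)_i = w_{σ(i)}`, `t_w + σ·w₃ = σ·w₂` and `M·w₂ − v = M·w₃` over
`ℤ_q`, then `w' := σ⁻¹·t_w` satisfies `w' ∈ VALID` and `M·w' = v`. -/
theorem stmt5 (n ℓ q : ℕ) (hn : 0 < n) (hℓ : 0 < ℓ) (hq : 2 ≤ q)
    (M : Matrix (Fin n) (Fin ℓ) (ZMod q)) (v : Fin n → ZMod q)
    (VALID : Set (Fin ℓ → ZMod q)) (σ : Equiv.Perm (Fin ℓ))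
    (hV : ∀ w : Fin ℓ → ZMod q, w ∈ VALID ↔ (fun i => w (σ i)) ∈ VALID)
    (tw w₂ w₃ : Fin ℓ → ZMod q)
    (htw : tw ∈ VALID)
    (hsum : (tw + fun i => w₃ (σ i)) = fun i => w₂ (σ i))
    (hM : M.mulVec w₂ - v = M.mulVec w₃) :
    (fun i => tw (σ⁻¹ i)) ∈ VALID ∧ M.mulVec (fun i => tw (σ⁻¹ i)) = v := by
  have hw' : (fun i => tw (σ⁻¹ i)) = w₂ - w₃ := by
    funext i
    have := congrFun hsum (σ⁻¹ i)
    simp at this ⊢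
    linear_combination this
  constructor
  · rw [hV]
    simpa using htw
  · rw [hw', Matrix.mulVec_sub, ← hM]
    ring
end

section
/- Let v₁,…,v_η ∈ {0,1}^𝔫 be pairwise distinct with associated set SET. A vector s ∈ ℤ^𝔫 satisfies s ∈ {v₁,…,v_η} if and only if there exist 𝔫-dimensional blocks s₂,…,s_η ∈ {0,1}^𝔫 such that the concatenation (s ‖ s₂ ‖ … ‖ s_η) belongs to SET. -/
/-- Given `η` pairwise-distinct binary blocks `v₁, …, v_η ∈ {0,1}^𝔫`, `SET` is the set of
block-vectors (represented as `Fin η → Fin 𝔫 → ℤ`, i.e. `η` consecutive length-`𝔫` blocks)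
whose blocks are exactly `v₁, …, v_η` in some order, i.e. `{w₁,…,w_η} = {v₁,…,v_η}`. -/
def SET {𝔫 η : ℕ} (v : Fin η → Fin 𝔫 → ℤ) : Set (Fin η → Fin 𝔫 → ℤ) :=
  {w | Set.range w = Set.range v}

/-- A vector `s ∈ ℤ^𝔫` satisfies `s ∈ {v₁,…,v_η}` iff there exist binary blocks
`s₂, …, s_η ∈ {0,1}^𝔫` such that the concatenation `(s ‖ s₂ ‖ … ‖ s_η)` belongs to `SET`
(represented here as a block-vector `w` whose first block is `s`). -/
theorem stmt7 (𝔫 η : ℕ) (h𝔫 : 0 < 𝔫) (hη : 0 < η)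
    (v : Fin η → Fin 𝔫 → ℤ)
    (hbin : ∀ j i, v j i = 0 ∨ v j i = 1)
    (hdist : Function.Injective v)
    (s : Fin 𝔫 → ℤ) :
    (∃ j, s = v j) ↔
      ∃ w : Fin η → Fin 𝔫 → ℤ,
        w ⟨0, hη⟩ = s ∧ (∀ j i, w j i = 0 ∨ w j i = 1) ∧ w ∈ SET v := by
  constructor
  · rintro ⟨j, rfl⟩
    refine ⟨v ∘ Equiv.swap ⟨0, hη⟩ j, ?_, fun k i => hbin _ i, ?_⟩
    · simp [Equiv.swap_apply_left]
    · show Set.range _ = Set.range v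
      rw [Set.range_comp, Equiv.range_eq_univ, Set.image_univ]
  · rintro ⟨w, hw0, _, hset⟩
    have : s ∈ Set.range v := by
      rw [← hset]; exact ⟨⟨0, hη⟩, hw0⟩
    obtain ⟨j, hj⟩ := this
    exact ⟨j, hj.symm⟩
end

section
/- Let n_max ≥ 2, K ≥ 1 and N ≥ 1 be integers. For each j ∈ [N], let v^{(j)}_1,…,v^{(j)}_{η_j} ∈ {0,1}^8 be pairwise distinct with associated set SET_j, and let SET₀ be the set of vectors in {0,1}^{n_max·⌈log₂ n_max⌉} whose n_max consecutive length-⌈log₂ n_max⌉ blocks are exactly bin(0),…,bin(n_max−1) in some order. Define VALID as the set of all vectors w = (e₀ ‖ x₁ ‖ … ‖ x_N ‖ z) with e₀ ∈ SET₀, x_j ∈ SET_j for every j ∈ [N], and z ∈ B²_K. For φ = (π, τ₁, …, τ_N, θ) ∈ S_{n_max} × S_{η₁} × ⋯ × S_{η_N} × S_{2K}, define Γ_φ(w) = ( T_{π,⌈log₂ n_max⌉}(e₀) ‖ T_{τ₁,8}(x₁) ‖ … ‖ T_{τ_N,8}(x_N) ‖ θ(z) ). Then for every such φ and every vector w of the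 appropriate dimension: w ∈ VALID if and only if Γ_φ(w) ∈ VALID. -/
/-- `bin(k)`: the `⌈log₂ n⌉`-bit binary representation of `k ∈ {0,…,n−1}`,
as a length-`⌈log₂ n⌉` vector over `ℤ` with entries in `{0,1}`. -/
def binRep (n : ℕ) (k : Fin n) : Fin (Nat.clog 2 n) → ℤ :=
  fun i => (((k : ℕ) / 2 ^ (i : ℕ)) % 2 : ℕ)

/-- Invariance of `VALID` under the permutations `Γ_φ`: a vector
`w = (e₀ ‖ x₁ ‖ … ‖ x_N ‖ z)` (in block representation) belongs to `VALID`
(i.e. `e₀ ∈ SET₀`, `x_j ∈ SET_j` for all `j`, and `z ∈ B²_K`) iff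
`Γ_φ(w) = (T_{π,⌈log₂ n_max⌉}(e₀) ‖ T_{τ₁,8}(x₁) ‖ … ‖ T_{τ_N,8}(x_N) ‖ θ(z))`
belongs to `VALID`, for every
`φ = (π, τ₁, …, τ_N, θ) ∈ S_{n_max} × S_{η₁} × ⋯ × S_{η_N} × S_{2K}`. -/
theorem stmt12 (nmax K N : ℕ) (hn : 2 ≤ nmax) (hK : 1 ≤ K) (hN : 1 ≤ N)
    (η : Fin N → ℕ)
    (v : (j : Fin N) → Fin (η j) → Fin 8 → ℤ)
    (hvbin : ∀ j k i, v j k i = 0 ∨ v j k i = 1)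
    (hvdist : ∀ j, Function.Injective (v j))
    (e₀ : Fin nmax → Fin (Nat.clog 2 nmax) → ℤ)
    (x : (j : Fin N) → Fin (η j) → Fin 8 → ℤ)
    (z : Fin (K + K) → ℤ)
    (π : Equiv.Perm (Fin nmax))
    (τ : (j : Fin N) → Equiv.Perm (Fin (η j)))
    (θ : Equiv.Perm (Fin (K + K))) :
    (Set.range e₀ = Set.range (binRep nmax)
      ∧ (∀ j, Set.range (x j) = Set.range (v j))
      ∧ (∀ i, z i = 0 ∨ z i = 1)
      ∧ (Finset.univ.filter fun i => z i = 1).card = K)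
    ↔
    (Set.range (fun j => e₀ (π j)) = Set.range (binRep nmax)
      ∧ (∀ j, Set.range (fun k => x j (τ j k)) = Set.range (v j))
      ∧ (∀ i, z (θ i) = 0 ∨ z (θ i) = 1)
      ∧ (Finset.univ.filter fun i => z (θ i) = 1).card = K) := by
  have h1 : Set.range (fun j => e₀ (π j)) = Set.range e₀ :=
    π.surjective.range_comp e₀
  have h2 : ∀ j, Set.range (fun k => x j (τ j k)) = Set.range (x j) := fun j =>
    (τ j).surjective.range_comp (x j)
  have h3 : (∀ i, z (θ i) = 0 ∨ z (θ i) = 1) ↔ (∀ i, z i = 0 ∨ z i = 1) :=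
    ⟨fun h i => by simpa using h (θ.symm i), fun h i => h _⟩
  have h4 : (Finset.univ.filter fun i => z (θ i) = 1).card
      = (Finset.univ.filter fun i => z i = 1).card := by
    apply Finset.card_bij (fun a _ => θ a)
    · intro a ha; simpa using (Finset.mem_filter.mp ha).2
    · intro a _ b _ h; exact θ.injective h
    · intro b hb; exact ⟨θ.symm b, by simpa using (Finset.mem_filter.mp hb).2, by simp⟩
  rw [h1, h3, h4]
  constructor
  · rintro ⟨a, b, c, d⟩; exact ⟨a, fun j => (h2 j).trans (b j), c, d⟩
  · rintro ⟨a, b, c, d⟩; exact ⟨a, fun j => (h2 j).symm.trans (b j), c, d⟩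
end

section
/- Let n_max ≥ 2, K ≥ 1 and N ≥ 1 be integers, and let VALID, S = S_{n_max} × S_{η₁} × ⋯ × S_{η_N} × S_{2K} and the permutations Γ_φ be as in the ZKPPC construction. Fix w ∈ VALID. If φ is drawn uniformly at random from S, then Γ_φ(w) is uniformly distributed over VALID; that is, the pushforward of the uniform probability distribution on S under the map φ ↦ Γ_φ(w) equals the uniform probability distribution on VALID. -/
open scoped ENNReal Classical

/-- The set `VALID` of the ZKPPC construction: vectors `w = (e₀ ‖ x₁ ‖ … ‖ x_N ‖ z)`
(in block representation) with `e₀ ∈ SET₀` (its `n_max` blocks are exactly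
`bin(0), …, bin(n_max−1)` in some order), `x_j ∈ SET_j` (its `η_j` blocks are exactly
`v^{(j)}_1, …, v^{(j)}_{η_j}` in some order) for every `j`, and `z ∈ B²_K`. -/
def VALID (nmax K N : ℕ) (η : Fin N → ℕ) (v : (j : Fin N) → Fin (η j) → Fin 8 → ℤ) :
    Set ((Fin nmax → Fin (Nat.clog 2 nmax) → ℤ)
          × ((j : Fin N) → Fin (η j) → Fin 8 → ℤ) × (Fin (K + K) → ℤ)) :=
  {w | Set.range w.1 = Set.range (binRep nmax)
        ∧ (∀ j, Set.range (w.2.1 j) = Set.range (v j))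
        ∧ (∀ i, w.2.2 i = 0 ∨ w.2.2 i = 1)
        ∧ (Finset.univ.filter fun i => w.2.2 i = 1).card = K}

/-- The permutation `Γ_φ` for `φ = (π, τ₁, …, τ_N, θ)`:
`Γ_φ(e₀ ‖ x₁ ‖ … ‖ x_N ‖ z) = (T_{π,⌈log₂ n_max⌉}(e₀) ‖ T_{τ₁,8}(x₁) ‖ … ‖ T_{τ_N,8}(x_N) ‖ θ(z))`. -/
def Gamma (nmax K N : ℕ) (η : Fin N → ℕ)
    (φ : Equiv.Perm (Fin nmax) × ((j : Fin N) → Equiv.Perm (Fin (η j)))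
          × Equiv.Perm (Fin (K + K)))
    (w : (Fin nmax → Fin (Nat.clog 2 nmax) → ℤ)
          × ((j : Fin N) → Fin (η j) → Fin 8 → ℤ) × (Fin (K + K) → ℤ)) :
    (Fin nmax → Fin (Nat.clog 2 nmax) → ℤ)
      × ((j : Fin N) → Fin (η j) → Fin 8 → ℤ) × (Fin (K + K) → ℤ) :=
  (fun j => w.1 (φ.1 j), fun j k => w.2.1 j (φ.2.1 j k), fun i => w.2.2 (φ.2.2 i))

/-!
The maps `Γ_φ` form a right action of the group `S`, which preserves `VALID`. The action is
transitive on `VALID`: the blocks of `e₀` (resp. `x_j`) are an injective family with a prescribed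
range, and `z` is a 0/1-vector with a prescribed number of ones, so two valid vectors differ by a
rearrangement in each component. For a right action every fibre of `φ ↦ Γ_φ(w)` is a translate
of the stabiliser of `w`; all fibres having the same size, the pushforward of the uniform
distribution is uniform on the orbit.
-/

section GeneralLemmas

open Function Set

variable {α β : Type*}

theorem Function.Injective.of_range_eq [Finite α] {f g : α → β} (hg : Injective g)
    (h : range f = range g) : Injective f := by
  have hsurj : Surjective (rangeFactorization f) := rangeFactorization_surjective
  rw [← Finite.injective_iff_surjective_of_equiv
    ((Equiv.ofInjective g hg).trans (Equiv.setCongr h.symm))] at hsurj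
  exact Subtype.val_injective.comp hsurj

theorem exists_perm_comp_eq_of_range_eq [Finite α] {f g : α → β} (hg : Injective g)
    (h : range f = range g) : ∃ σ : Equiv.Perm α, ∀ a, f (σ a) = g a :=
  have hf : Injective f := hg.of_range_eq h
  ⟨(Equiv.ofInjective g hg).trans ((Equiv.setCongr h.symm).trans (Equiv.ofInjective f hf).symm),
    fun _ => Equiv.apply_ofInjective_symm hf _⟩

theorem exists_perm_comp_eq_of_card_fiber_eq [Finite α] {f g : α → β}
    (h : ∀ b, Nat.card {a // f a = b} = Nat.card {a // g a = b}) :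
    ∃ σ : Equiv.Perm α, ∀ a, f (σ a) = g a :=
  ⟨(Equiv.ofFiberEquiv fun b => (Finite.card_eq.mp (h b).symm).some), Equiv.ofFiberEquiv_map _⟩

theorem card_fiber_eq_of_binary [Fintype α] {z z' : α → ℤ} (hz : ∀ i, z i = 0 ∨ z i = 1)
    (hz' : ∀ i, z' i = 0 ∨ z' i = 1)
    (h : (Finset.univ.filter fun i => z i = 1).card = (Finset.univ.filter fun i => z' i = 1).card)
    (b : ℤ) : Nat.card {i // z i = b} = Nat.card {i // z' i = b} := by
  have hzero : ∀ y : α → ℤ, (∀ i, y i = 0 ∨ y i = 1) →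
      (Finset.univ.filter fun i => y i = 0) = Finset.univ.filter fun i => ¬ y i = 1 := by
    intro y hy
    refine Finset.filter_congr fun i _ => ?_
    rcases hy i with h | h <;> simp [h]
  simp only [Nat.card_eq_fintype_card, Fintype.card_subtype]
  rcases eq_or_ne b 1 with rfl | hb1
  · exact h
  rcases eq_or_ne b 0 with rfl | hb0
  · rw [hzero z hz, hzero z' hz', Finset.filter_not, Finset.filter_not, Finset.card_sdiff,
      Finset.card_sdiff, Finset.inter_univ, Finset.inter_univ, h]
  · have hempty : ∀ y : α → ℤ, (∀ i, y i = 0 ∨ y i = 1) →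
        (Finset.univ.filter fun i => y i = b) = ∅ := by
      intro y hy
      refine Finset.filter_false_of_mem fun i _ => ?_
      rcases hy i with h | h <;> rw [h] <;> tauto
    rw [hempty z hz, hempty z' hz']

theorem card_fiber_eq_of_right_action {G X : Type*} [Group G] (act : G → X → X)
    (act_one : ∀ x, act 1 x = x) (act_mul : ∀ g h x, act (g * h) x = act h (act g x))
    (x : X) (s t : G) :
    Nat.card {g // act g x = act s x} = Nat.card {g // act g x = act t x} := by
  have shift : ∀ {g s : G} (t : G), act g x = act s x → act (g * s⁻¹ * t) x = act t x := by
    intro g s t h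
    rw [act_mul, act_mul, h, ← act_mul s, mul_inv_cancel, act_one]
  exact Nat.card_congr
    { toFun g := ⟨g * s⁻¹ * t, shift t g.2⟩
      invFun g := ⟨g * t⁻¹ * s, shift s g.2⟩
      left_inv g := by simp
      right_inv g := by simp }

theorem Nat.card_eq_card_range_mul_card_fiber [Finite α] (f : α → β)
    (hfib : ∀ a a', Nat.card {x // f x = f a} = Nat.card {x // f x = f a'}) (a : α) :
    Nat.card α = Nat.card (range f) * Nat.card {x // f x = f a} := by
  have : Fintype (range f) := Fintype.ofFinite _
  calc Nat.card α
      = Nat.card (Σ u : range f, {x // rangeFactorization f x = u}) :=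
        Nat.card_congr (Equiv.sigmaFiberEquiv _).symm
    _ = ∑ u : range f, Nat.card {x // rangeFactorization f x = u} := Nat.card_sigma
    _ = ∑ _u : range f, Nat.card {x // f x = f a} := by
        refine Finset.sum_congr rfl fun ⟨_, a', ha'⟩ _ => ?_
        subst ha'
        exact (Nat.card_congr (Equiv.subtypeEquivRight fun x => Subtype.ext_iff)).trans
          (hfib a' a)
    _ = Nat.card (range f) * Nat.card {x // f x = f a} := by
        rw [Finset.sum_const, Finset.card_univ, smul_eq_mul, ← Nat.card_eq_fintype_card]

theorem PMF.map_uniformOfFintype_apply_of_card_fiber_eq [Fintype α] [Nonempty α] (f : α → β)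
    (hfib : ∀ a a', Nat.card {x // f x = f a} = Nat.card {x // f x = f a'}) (b : β) :
    PMF.map f (PMF.uniformOfFintype α) b
      = if b ∈ range f then (Nat.card (range f) : ℝ≥0∞)⁻¹ else 0 := by
  have hmap : PMF.map f (PMF.uniformOfFintype α) b
      = Nat.card {x // f x = b} * (Fintype.card α : ℝ≥0∞)⁻¹ := by
    rw [PMF.map_apply, tsum_fintype]
    simp only [PMF.uniformOfFintype_apply]
    rw [Finset.sum_ite, Finset.sum_const_zero, add_zero, Finset.sum_const, nsmul_eq_mul,
      Nat.card_eq_fintype_card, Fintype.card_subtype]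
    simp only [eq_comm]
  rw [hmap]
  split_ifs with hb
  · obtain ⟨a, rfl⟩ := hb
    have hm : (Nat.card {x // f x = f a} : ℝ≥0∞) ≠ 0 := by
      have : Nonempty {x // f x = f a} := ⟨⟨a, rfl⟩⟩
      exact_mod_cast Nat.card_pos.ne'
    rw [← Nat.card_eq_fintype_card, Nat.card_eq_card_range_mul_card_fiber f hfib a, Nat.cast_mul,
      ENNReal.mul_inv (Or.inr (ENNReal.natCast_ne_top _)) (Or.inl (ENNReal.natCast_ne_top _)),
      mul_left_comm, ENNReal.mul_inv_cancel hm (ENNReal.natCast_ne_top _), mul_one]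
  · have : IsEmpty {x // f x = b} := ⟨fun x => hb ⟨x.1, x.2⟩⟩
    rw [Nat.card_of_isEmpty, Nat.cast_zero, zero_mul]

end GeneralLemmas

theorem binRep_injective (n : ℕ) : Function.Injective (binRep n) := by
  have high_bits : ∀ (k : Fin n) (i : ℕ), Nat.clog 2 n ≤ i → (k : ℕ).testBit i = false :=
    fun k i hi => Nat.testBit_eq_false_of_lt <| k.2.trans_le <|
      (Nat.le_pow_clog one_lt_two n).trans (Nat.pow_le_pow_right two_pos hi)
  intro k k' h
  refine Fin.ext (Nat.eq_of_testBit_eq fun i => ?_)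
  rcases lt_or_ge i (Nat.clog 2 n) with hi | hi
  · have hbit := congrFun h ⟨i, hi⟩
    simp only [binRep, Nat.cast_inj] at hbit
    rw [Nat.testBit_eq_decide_div_mod_eq, Nat.testBit_eq_decide_div_mod_eq, hbit]
  · rw [high_bits k i hi, high_bits k' i hi]

section Gamma

variable {nmax K N : ℕ} {η : Fin N → ℕ} {v : (j : Fin N) → Fin (η j) → Fin 8 → ℤ}
  {w : (Fin nmax → Fin (Nat.clog 2 nmax) → ℤ)
    × ((j : Fin N) → Fin (η j) → Fin 8 → ℤ) × (Fin (K + K) → ℤ)}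

theorem Gamma_mem_VALID (hw : w ∈ VALID nmax K N η v)
    (φ : Equiv.Perm (Fin nmax) × ((j : Fin N) → Equiv.Perm (Fin (η j)))
      × Equiv.Perm (Fin (K + K))) :
    Gamma nmax K N η φ w ∈ VALID nmax K N η v := by
  obtain ⟨he, hx, hz, hcard⟩ := hw
  refine ⟨?_, fun j => ?_, fun i => hz _, ?_⟩
  · exact (φ.1.surjective.range_comp w.1).trans he
  · exact ((φ.2.1 j).surjective.range_comp (w.2.1 j)).trans (hx j)
  · refine (Finset.card_equiv φ.2.2 fun i => ?_).trans hcard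
    rw [Finset.mem_filter, Finset.mem_filter]
    simp [Gamma]

theorem exists_Gamma_eq (hvdist : ∀ j, Function.Injective (v j))
    (hw : w ∈ VALID nmax K N η v) {y} (hy : y ∈ VALID nmax K N η v) :
    ∃ φ, Gamma nmax K N η φ w = y := by
  obtain ⟨hwe, hwx, hwz, hwcard⟩ := hw
  obtain ⟨hye, hyx, hyz, hycard⟩ := hy
  obtain ⟨π, hπ⟩ := exists_perm_comp_eq_of_range_eq
    ((binRep_injective nmax).of_range_eq hye) (hwe.trans hye.symm)
  choose τ hτ using fun j => exists_perm_comp_eq_of_range_eq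
    ((hvdist j).of_range_eq (hyx j)) ((hwx j).trans (hyx j).symm)
  obtain ⟨θ, hθ⟩ := exists_perm_comp_eq_of_card_fiber_eq
    (card_fiber_eq_of_binary hwz hyz (hwcard.trans hycard.symm))
  exact ⟨(π, τ, θ), Prod.ext (funext hπ) (Prod.ext (funext fun j => funext (hτ j)) (funext hθ))⟩

theorem range_Gamma_eq_VALID (hvdist : ∀ j, Function.Injective (v j))
    (hw : w ∈ VALID nmax K N η v) :
    Set.range (fun φ => Gamma nmax K N η φ w) = VALID nmax K N η v :=
  (Set.range_subset_iff.2 (Gamma_mem_VALID hw)).antisymm fun _ hy => exists_Gamma_eq hvdist hw hy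

end Gamma

theorem stmt13_general (nmax K N : ℕ)
    (η : Fin N → ℕ)
    (v : (j : Fin N) → Fin (η j) → Fin 8 → ℤ)
    (hvdist : ∀ j, Function.Injective (v j))
    (w : (Fin nmax → Fin (Nat.clog 2 nmax) → ℤ)
          × ((j : Fin N) → Fin (η j) → Fin 8 → ℤ) × (Fin (K + K) → ℤ))
    (hw : w ∈ VALID nmax K N η v) :
    ∀ y, (PMF.map (fun φ => Gamma nmax K N η φ w)
            (PMF.uniformOfFintype
              (Equiv.Perm (Fin nmax) × ((j : Fin N) → Equiv.Perm (Fin (η j)))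
                × Equiv.Perm (Fin (K + K))))) y
        = if y ∈ VALID nmax K N η v then (Nat.card (VALID nmax K N η v) : ℝ≥0∞)⁻¹ else 0 := by
  intro y
  rw [← range_Gamma_eq_VALID hvdist hw]
  -- `convert` only reconciles the `Decidable` instances of the two `if`s.
  convert PMF.map_uniformOfFintype_apply_of_card_fiber_eq _
    (fun φ ψ => card_fiber_eq_of_right_action (Gamma nmax K N η) (fun _ => rfl)
      (fun _ _ _ => rfl) w φ ψ) y

/-- For fixed `w ∈ VALID`, if `φ = (π, τ₁, …, τ_N, θ)` is drawn uniformly at random from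
`S = S_{n_max} × S_{η₁} × ⋯ × S_{η_N} × S_{2K}`, then `Γ_φ(w)` is uniformly distributed over
`VALID`: the pushforward of the uniform distribution on `S` under `φ ↦ Γ_φ(w)` is the
uniform distribution on `VALID`. -/
theorem stmt13 (nmax K N : ℕ) (hn : 2 ≤ nmax) (hK : 1 ≤ K) (hN : 1 ≤ N)
    (η : Fin N → ℕ)
    (v : (j : Fin N) → Fin (η j) → Fin 8 → ℤ)
    (hvbin : ∀ j k i, v j k i = 0 ∨ v j k i = 1)
    (hvdist : ∀ j, Function.Injective (v j))
    (w : (Fin nmax → Fin (Nat.clog 2 nmax) → ℤ)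
          × ((j : Fin N) → Fin (η j) → Fin 8 → ℤ) × (Fin (K + K) → ℤ))
    (hw : w ∈ VALID nmax K N η v) :
    ∀ y, (PMF.map (fun φ => Gamma nmax K N η φ w)
            (PMF.uniformOfFintype
              (Equiv.Perm (Fin nmax) × ((j : Fin N) → Equiv.Perm (Fin (η j)))
                × Equiv.Perm (Fin (K + K))))) y
        = if y ∈ VALID nmax K N η v then (Nat.card (VALID nmax K N η v) : ℝ≥0∞)⁻¹ else 0 :=
  stmt13_general nmax K N η v hvdist w hw
end

section
/- Let f = ((k_D, k_S, k_L, k_U), n_min, n_max) be a password policy with k_all := n_min − (k_D + k_S + k_L + k_U) ≥ 0 and n_min ≤ n_max. Suppose x'₁,…,x'_{n_max} ∈ {0,1}^8 are length-8 blocks, and suppose there are pairwise-distinct indices δ_{α,i} ∈ [n_max] for α ∈ {D, S, L, U, all} and i ∈ [k_α], such that x'_{δ_{α,i}} ∈ Enc_α for every α and i. Then the string pw' over Σ_all obtained by taking, in order of increasing index j ∈ [n_max], the characters c with encode(c) = x'_j for those j with x'_j ∈ Enc_all, has length t' with n_min ≤ t' ≤ n_max, contains at least k_D digits, at least k_S symbols,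 at least k_L lower-case letters and at least k_U upper-case letters; i.e., f(pw') = true. -/
/-! Since `encode` is injective, the characters of `pw'` in a class `S` correspond one-to-one to
the blocks lying in `encode '' S`, and the distinct witness positions `δ` supply at least `k_α`
such blocks. All witnesses together give `n_min ≤ |pw'|`, while `|pw'| ≤ n_max` because `pw'`
encodes a sublist of the `n_max` blocks. -/

open scoped Classical

/-- Characters are identified with their ASCII codes in `[0,255]` (distinct characters have
distinct ASCII codes). `encode(c) ∈ {0,1}^8` is the 8-bit binary representation of the
ASCII code of `c`, as a vector over `ℤ`. -/
def encodeChar (c : Fin 256) : Fin 8 → ℤ :=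
  fun i => (((c : ℕ) / 2 ^ (i : ℕ)) % 2 : ℕ)

theorem encodeChar_injective : Function.Injective encodeChar := by
  intro a b h
  refine Fin.ext (Nat.eq_of_testBit_eq fun i => ?_)
  rcases lt_or_ge i 8 with hi | hi
  · have hbit := congrFun h ⟨i, hi⟩
    simp only [encodeChar, Nat.cast_inj] at hbit
    simp [Nat.testBit_eq_decide_div_mod_eq, hbit]
  · have h256 : 256 ≤ 2 ^ i := le_trans (by norm_num) (Nat.pow_le_pow_right two_pos hi)
    rw [Nat.testBit_lt_two_pow (a.isLt.trans_le h256),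
      Nat.testBit_lt_two_pow (b.isLt.trans_le h256)]

theorem card_le_length_filter_map_finRange {β ι : Type*} [Fintype ι] {n : ℕ}
    (x : Fin n → β) (p : β → Bool) (g : ι → Fin n) (hg : Function.Injective g)
    (hp : ∀ i, p (x (g i))) :
    Fintype.card ι ≤ (((List.finRange n).map x).filter p).length := by
  rw [List.filter_map, List.length_map]
  calc Fintype.card ι = (Finset.univ.image g).card := (Finset.card_image_of_injective _ hg).symm
    _ ≤ ((List.finRange n).filter (p ∘ x)).toFinset.card :=
        Finset.card_le_card fun j hj => by
          obtain ⟨i, -, rfl⟩ := Finset.mem_image.mp hj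
          simpa using hp i
    _ ≤ _ := List.toFinset_card_le _

theorem length_filter_eq_of_map_eq_filter_image {α β : Type*} {enc : α → β}
    (henc : Function.Injective enc) {S T : Set α} (hST : S ⊆ T) {xs : List β} {pw : List α}
    (hpw : pw.map enc = xs.filter fun b => decide (b ∈ enc '' T)) :
    (pw.filter fun c => decide (c ∈ S)).length
      = (xs.filter fun b => decide (b ∈ enc '' S)).length :=
  calc (pw.filter fun c => decide (c ∈ S)).length
      = ((pw.map enc).filter fun b => decide (b ∈ enc '' S)).length := by
        simp only [List.filter_map, List.length_map, Function.comp_def, henc.mem_set_image]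
    _ = ((xs.filter fun b => decide (b ∈ enc '' T)).filter
          fun b => decide (b ∈ enc '' S)).length := by rw [hpw]
    _ = _ := by
        rw [List.filter_filter]
        congr 2
        funext b
        simpa using fun hb => Set.image_mono hST hb

theorem card_le_length_filter_of_map_eq_filter_image {α β : Type*}
    {enc : α → β} (henc : Function.Injective enc) {S T : Set α} (hST : S ⊆ T) {n : ℕ}
    {x : Fin n → β} {pw : List α}
    (hpw : pw.map enc = ((List.finRange n).map x).filter fun b => decide (b ∈ enc '' T))
    {ι : Type*} [Fintype ι] (g : ι → Fin n) (hg : Function.Injective g)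
    (hx : ∀ i, x (g i) ∈ enc '' S) :
    Fintype.card ι ≤ (pw.filter fun c => decide (c ∈ S)).length := by
  rw [length_filter_eq_of_map_eq_filter_image henc hST hpw]
  exact card_le_length_filter_map_finRange x _ g hg (by simpa using hx)

theorem stmt14_general (kD kS kL kU kA nmin nmax : ℕ)
    (hsum : kD + kS + kL + kU + kA = nmin)
    (SD SS SL SU : Set (Fin 256))
    (x' : Fin nmax → Fin 8 → ℤ)
    (δD : Fin kD → Fin nmax) (δS : Fin kS → Fin nmax) (δL : Fin kL → Fin nmax)
    (δU : Fin kU → Fin nmax) (δA : Fin kA → Fin nmax)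
    (hinj : Function.Injective
      (Sum.elim (Sum.elim δD δS) (Sum.elim (Sum.elim δL δU) δA)))
    (hD : ∀ i, x' (δD i) ∈ encodeChar '' SD)
    (hS : ∀ i, x' (δS i) ∈ encodeChar '' SS)
    (hL : ∀ i, x' (δL i) ∈ encodeChar '' SL)
    (hU : ∀ i, x' (δU i) ∈ encodeChar '' SU)
    (hA : ∀ i, x' (δA i) ∈ encodeChar '' (SD ∪ SS ∪ SL ∪ SU)) :
    ∀ pw' : List (Fin 256),
      pw'.map encodeChar
        = ((List.finRange nmax).map x').filter
            (fun b => decide (b ∈ encodeChar '' (SD ∪ SS ∪ SL ∪ SU))) →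
      nmin ≤ pw'.length ∧ pw'.length ≤ nmax
        ∧ kD ≤ (pw'.filter fun c => decide (c ∈ SD)).length
        ∧ kS ≤ (pw'.filter fun c => decide (c ∈ SS)).length
        ∧ kL ≤ (pw'.filter fun c => decide (c ∈ SL)).length
        ∧ kU ≤ (pw'.filter fun c => decide (c ∈ SU)).length := by
  intro pw' hpw
  obtain ⟨hsubD, hsubS, hsubL, hsubU⟩ : SD ⊆ SD ∪ SS ∪ SL ∪ SU ∧ SS ⊆ SD ∪ SS ∪ SL ∪ SU ∧
      SL ⊆ SD ∪ SS ∪ SL ∪ SU ∧ SU ⊆ SD ∪ SS ∪ SL ∪ SU := by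
    refine ⟨?_, ?_, ?_, ?_⟩ <;> intro c hc <;> simp [hc]
  have count := fun {S : Set (Fin 256)} (hS : S ⊆ SD ∪ SS ∪ SL ∪ SU) {ι : Type}
    [Fintype ι] => card_le_length_filter_of_map_eq_filter_image encodeChar_injective hS hpw (ι := ι)
  have hall : ∀ i, x' (Sum.elim (Sum.elim δD δS) (Sum.elim (Sum.elim δL δU) δA) i)
      ∈ encodeChar '' (SD ∪ SS ∪ SL ∪ SU) := by
    rintro ((i | i) | (i | i) | i)
    exacts [Set.image_mono hsubD (hD i), Set.image_mono hsubS (hS i),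
      Set.image_mono hsubL (hL i), Set.image_mono hsubU (hU i), hA i]
  refine ⟨?_, ?_, ?_, ?_, ?_, ?_⟩
  · calc nmin = Fintype.card ((Fin kD ⊕ Fin kS) ⊕ (Fin kL ⊕ Fin kU) ⊕ Fin kA) := by
          simp only [Fintype.card_sum, Fintype.card_fin]; omega
      _ ≤ _ := count subset_rfl _ hinj hall
      _ ≤ pw'.length := List.length_filter_le _ _
  · calc pw'.length = (pw'.map encodeChar).length := (List.length_map _).symm
      _ ≤ ((List.finRange nmax).map x').length := hpw ▸ List.length_filter_le _ _
      _ = nmax := by simp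
  · simpa using count hsubD δD (hinj.comp (Sum.inl_injective.comp Sum.inl_injective)) hD
  · simpa using count hsubS δS (hinj.comp (Sum.inl_injective.comp Sum.inr_injective)) hS
  · simpa using count hsubL δL
      (hinj.comp (Sum.inr_injective.comp (Sum.inl_injective.comp Sum.inl_injective))) hL
  · simpa using count hsubU δU
      (hinj.comp (Sum.inr_injective.comp (Sum.inl_injective.comp Sum.inr_injective))) hU

/-- Extraction step of the ZKPPC protocol: given length-8 blocks `x'₁, …, x'_{n_max}` and
pairwise-distinct positions `δ_{α,i} ∈ [n_max]` (for `α ∈ {D,S,L,U,all}`, `i ∈ [k_α]`,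
where `k_all = n_min − (k_D+k_S+k_L+k_U) ≥ 0`) with `x'_{δ_{α,i}} ∈ Enc_α`, the string
`pw'` obtained by taking, in order of increasing `j`, the characters `c` with
`encode(c) = x'_j` for those `j` with `x'_j ∈ Enc_all`, has length `t'` with
`n_min ≤ t' ≤ n_max` and contains at least `k_D` digits, `k_S` symbols, `k_L` lower-case
and `k_U` upper-case letters; i.e. `f(pw') = true`. -/
theorem stmt14 (kD kS kL kU kA nmin nmax : ℕ)
    (hsum : kD + kS + kL + kU + kA = nmin) (hmn : nmin ≤ nmax)
    (SD SS SL SU : Set (Fin 256))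
    (hDS : Disjoint SD SS) (hDL : Disjoint SD SL) (hDU : Disjoint SD SU)
    (hSL : Disjoint SS SL) (hSU : Disjoint SS SU) (hLU : Disjoint SL SU)
    (x' : Fin nmax → Fin 8 → ℤ)
    (δD : Fin kD → Fin nmax) (δS : Fin kS → Fin nmax) (δL : Fin kL → Fin nmax)
    (δU : Fin kU → Fin nmax) (δA : Fin kA → Fin nmax)
    (hinj : Function.Injective
      (Sum.elim (Sum.elim δD δS) (Sum.elim (Sum.elim δL δU) δA)))
    (hD : ∀ i, x' (δD i) ∈ encodeChar '' SD)
    (hS : ∀ i, x' (δS i) ∈ encodeChar '' SS)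
    (hL : ∀ i, x' (δL i) ∈ encodeChar '' SL)
    (hU : ∀ i, x' (δU i) ∈ encodeChar '' SU)
    (hA : ∀ i, x' (δA i) ∈ encodeChar '' (SD ∪ SS ∪ SL ∪ SU)) :
    ∀ pw' : List (Fin 256),
      pw'.map encodeChar
        = ((List.finRange nmax).map x').filter
            (fun b => decide (b ∈ encodeChar '' (SD ∪ SS ∪ SL ∪ SU))) →
      nmin ≤ pw'.length ∧ pw'.length ≤ nmax
        ∧ kD ≤ (pw'.filter fun c => decide (c ∈ SD)).length
        ∧ kS ≤ (pw'.filter fun c => decide (c ∈ SS)).length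
        ∧ kL ≤ (pw'.filter fun c => decide (c ∈ SL)).length
        ∧ kU ≤ (pw'.filter fun c => decide (c ∈ SU)).length :=
  stmt14_general kD kS kL kU kA nmin nmax hsum SD SS SL SU x' δD δS δL δU δA hinj hD hS hL hU hA
end
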